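/- arXiv:2601.19449 — 2 statements merged into one kernel-verified Lean document; each statement's English description precedes it below -/
import Mathlib

section
/- There is no continuous bijection from R to R^2. -/
/-!
By Baire's theorem, one of the compact sets `f '' [-n, n]` covering `ℝ²` contains a ball, and on
such a compact set `f⁻¹` is continuous. Precomposing with a homeomorphism `ℝ² ≃ ball` gives a
continuous injection `ℝ² → ℝ`, which cannot exist: its value at `x`, lying between two other
values, would also be taken on the connected set `ℝ² \ {x}`.
-/

open Set Function Metric

theorem not_injective_of_isPreconnected_compl_singleton {X α : Type*} [TopologicalSpace X]
    [PreconnectedSpace X] [Nontrivial X] [TopologicalSpace α] [LinearOrder α]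
    [OrderClosedTopology α] [DenselyOrdered α]
    (hX : ∀ x : X, IsPreconnected ({x}ᶜ : Set X)) {g : X → α} (hg : Continuous g) :
    ¬ Injective g := by
  intro hinj
  obtain ⟨a, b, hab⟩ := exists_pair_ne X
  wlog hlt : g a < g b generalizing a b
  · exact this b a hab.symm ((hinj.ne hab).lt_or_gt.resolve_left hlt)
  obtain ⟨t, hat, htb⟩ := exists_between hlt
  obtain ⟨x, rfl⟩ : t ∈ range g :=
    (isPreconnected_range hg).Icc_subset (mem_range_self a) (mem_range_self b) ⟨hat.le, htb.le⟩
  have hax : a ∈ ({x}ᶜ : Set X) := fun h => hat.ne (congrArg g h)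
  have hbx : b ∈ ({x}ᶜ : Set X) := fun h => htb.ne' (congrArg g h)
  obtain ⟨y, hyx, hy⟩ := ((hX x).image g hg.continuousOn).Icc_subset
    (mem_image_of_mem g hax) (mem_image_of_mem g hbx) ⟨hat.le, htb.le⟩
  exact hyx (hinj hy)

theorem not_injective_of_one_lt_rank {E α : Type*} [AddCommGroup E] [Module ℝ E]
    [TopologicalSpace E] [IsTopologicalAddGroup E] [ContinuousSMul ℝ E] [TopologicalSpace α]
    [LinearOrder α] [OrderClosedTopology α] [DenselyOrdered α]
    (hE : 1 < Module.rank ℝ E) {g : E → α} (hg : Continuous g) : ¬ Injective g :=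
  haveI := IsTopologicalAddGroup.pathConnectedSpace (E := E)
  haveI := rank_pos_iff_nontrivial.mp (zero_lt_one.trans hE)
  not_injective_of_isPreconnected_compl_singleton
    (fun x => (isConnected_compl_singleton_of_one_lt_rank hE x).isPreconnected) hg

theorem not_injOn_ball_of_one_lt_rank {E α : Type*} [NormedAddCommGroup E] [NormedSpace ℝ E]
    [TopologicalSpace α] [LinearOrder α] [OrderClosedTopology α] [DenselyOrdered α]
    (hE : 1 < Module.rank ℝ E) {c : E} {r : ℝ} (hr : 0 < r) {g : E → α}
    (hg : ContinuousOn g (ball c r)) : ¬ InjOn g (ball c r) := by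
  intro hinj
  set φ := OpenPartialHomeomorph.univBall (E := E) c r
  have hφ_mem : ∀ x, φ x ∈ ball c r := fun x => by
    rw [← OpenPartialHomeomorph.univBall_target c hr]
    exact φ.map_source (by rw [OpenPartialHomeomorph.univBall_source]; trivial)
  have hφ_inj : Injective φ := injOn_univ.1 (OpenPartialHomeomorph.univBall_source c r ▸ φ.injOn)
  exact not_injective_of_one_lt_rank hE
    (hg.comp_continuous (OpenPartialHomeomorph.continuous_univBall c r) hφ_mem)
    fun x y hxy => hφ_inj (hinj (hφ_mem x) (hφ_mem y) hxy)

theorem exists_isCompact_nonempty_interior_image {X Y : Type*} [TopologicalSpace X]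
    [SigmaCompactSpace X] [TopologicalSpace Y] [T2Space Y] [BaireSpace Y] [Nonempty Y]
    {f : X → Y} (hf : Continuous f) (hsurj : Surjective f) :
    ∃ K, IsCompact K ∧ (interior (f '' K)).Nonempty := by
  have hcover : ⋃ n, f '' compactCovering X n = univ := by
    rw [← image_iUnion, iUnion_compactCovering, image_univ, hsurj.range_eq]
  obtain ⟨n, hn⟩ := nonempty_interior_of_iUnion_of_closed
    (fun n => ((isCompact_compactCovering X n).image hf).isClosed) hcover
  exact ⟨_, isCompact_compactCovering X n, hn⟩

theorem IsCompact.continuousOn_invFun_image {X Y : Type*} [TopologicalSpace X] [Nonempty X]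
    [TopologicalSpace Y] [T2Space Y] {f : X → Y} {K : Set X} (hK : IsCompact K)
    (hf : Continuous f) (hinj : Injective f) : ContinuousOn (invFun f) (f '' K) := by
  rw [continuousOn_iff_isClosed]
  intro t ht
  refine ⟨f '' (t ∩ K), ((hK.inter_left ht).image hf).isClosed, ?_⟩
  ext y
  constructor
  · rintro ⟨hyt, x, hxK, rfl⟩
    rw [mem_preimage, leftInverse_invFun hinj x] at hyt
    exact ⟨mem_image_of_mem f ⟨hyt, hxK⟩, mem_image_of_mem f hxK⟩
  · rintro ⟨⟨x, ⟨hxt, hxK⟩, rfl⟩, -⟩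
    exact ⟨by rwa [mem_preimage, leftInverse_invFun hinj x], mem_image_of_mem f hxK⟩

/-- There is no continuous bijection from `ℝ` to `ℝ²`. -/
theorem no_continuous_bijection_R_to_R2 :
    ¬ ∃ f : ℝ → ℝ × ℝ, Continuous f ∧ Function.Bijective f := by
  rintro ⟨f, hf, hbij⟩
  obtain ⟨K, hK, c, hc⟩ := exists_isCompact_nonempty_interior_image hf hbij.surjective
  obtain ⟨r, hr, hball⟩ := Metric.isOpen_iff.mp isOpen_interior c hc
  have hinv : ContinuousOn (invFun f) (ball c r) :=
    (hK.continuousOn_invFun_image hf hbij.injective).mono (hball.trans interior_subset)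
  have hrank : 1 < Module.rank ℝ (ℝ × ℝ) := by
    rw [rank_prod', Module.rank_self]
    norm_num
  exact not_injOn_ball_of_one_lt_rank hrank hr hinv
    (rightInverse_invFun hbij.surjective).injective.injOn
end

section
/- Let x_1,...,x_n be pairwise orthogonal nonzero vectors in R^d. Suppose a node v has degree d_v ≥ 1 and its neighborhood multiset X has size d_v. Then the mean aggregation m(X) = (1/d_v) Σ_{x∈X} x together with the degree d_v determines the multiset X uniquely; i.e., if (d_v, m(X)) = (d_w, m(Y)) for multisets X, Y of sizes d_v, d_w respectively, then X = Y. -/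
open scoped RealInnerProductSpace

/-- Mean aggregation together with the degree determines the neighborhood
multiset when features are pairwise orthogonal and nonzero. -/
theorem mean_and_degree_determine_multiset (d n : ℕ)
    (x : Fin n → EuclideanSpace ℝ (Fin d))
    (horth : ∀ i j, i ≠ j → ⟪x i, x j⟫ = 0)
    (hne : ∀ i, x i ≠ 0)
    (c c' : Fin n → ℕ)
    (hdeg : 1 ≤ ∑ i, c i)
    (hdegeq : ∑ i, c i = ∑ i, c' i)
    (hmean : ((∑ i, c i : ℕ) : ℝ)⁻¹ • ∑ i, (c i : ℝ) • x i
           = ((∑ i, c' i : ℕ) : ℝ)⁻¹ • ∑ i, (c' i : ℝ) • x i) :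
    c = c' := by
  have hz : ((∑ i, c i : ℕ) : ℝ) ≠ 0 := by
    have : (0 : ℝ) < (∑ i, c i : ℕ) := by exact_mod_cast hdeg
    exact this.ne'
  rw [← hdegeq] at hmean
  have hsum : ∑ i, (c i : ℝ) • x i = ∑ i, (c' i : ℝ) • x i :=
    smul_right_injective _ (inv_ne_zero hz) hmean
  funext j
  have h := congrArg (fun v => ⟪v, x j⟫) hsum
  simp only [sum_inner, real_inner_smul_left] at h
  rw [Finset.sum_eq_single j, Finset.sum_eq_single j] at h
  · have hx : ⟪x j, x j⟫ ≠ 0 := inner_self_ne_zero.mpr (hne j)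
    have : (c j : ℝ) = c' j := mul_right_cancel₀ hx h
    exact_mod_cast this
  · intro i _ hij; rw [horth i j hij, mul_zero]
  · intro h; simp at h
  · intro i _ hij; rw [horth i j hij, mul_zero]
  · intro h; simp at h
end
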